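/- Let n ≥ 2, let k ≥ 0 be the exponent of the largest power of 2 dividing n, let n₀ = n / 2^k, and let n₀ = Σ_{i=1}^ℓ 2^{m_i} with m_1 > m_2 > ... > m_{ℓ−1} > m_ℓ = 0 be the binary expansion of n₀, with ℓ > 1. Then for every j with 2 ≤ j ≤ ℓ − 1 such that m_j > m_{j+1} + 1, setting a = 2^k(Σ_{i=1}^{j−1} 2^{m_i − 1} + 2^{m_j}), the pair (a, n − a) belongs to QB(n). -/

import Mathlib

/-- The Colless index of the maximally balanced bifurcating tree with `n` leaves:
`c 1 = 0` and `c n = c ⌈n/2⌉ + c ⌊n/2⌋ + (⌈n/2⌉ - ⌊n/2⌋)` for `n ≥ 2`. -/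
def c : ℕ → ℕ
  | 0 => 0
  | 1 => 0
  | n + 2 => c ((n + 3) / 2) + c ((n + 2) / 2) + ((n + 3) / 2 - (n + 2) / 2)
decreasing_by all_goals omega

/-- \`QB n\` is the set of pairs \`(n₁, n₂)\` with \`1 ≤ n₂ ≤ n₁\`, \`n₁ + n₂ = n\` and
\`c n₁ + c n₂ + (n₁ - n₂) = c n\`. -/
def QB (n : ℕ) : Set (ℕ × ℕ) :=
  {p : ℕ × ℕ | 1 ≤ p.2 ∧ p.2 ≤ p.1 ∧ p.1 + p.2 = n ∧ c p.1 + c p.2 + (p.1 - p.2) = c n}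

lemma c_two_mul (a : ℕ) : c (2 * a) = 2 * c a := by
  match a with
  | 0 => show c 0 = 2 * c 0; rw [c]
  | a + 1 =>
    show c (2 * a + 2) = _
    rw [c]
    have h1 : (2 * a + 3) / 2 = a + 1 := by omega
    have h2 : (2 * a + 2) / 2 = a + 1 := by omega
    rw [h1, h2]
    omega

lemma c_odd (a : ℕ) (ha : 1 ≤ a) : c (2 * a + 1) = c (a + 1) + c a + 1 := by
  match a, ha with
  | a + 1, _ =>
    show c (2 * a + 3) = _
    have h3 : 2 * a + 3 = (2 * a + 1) + 2 := by ring
    rw [h3, c]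
    have h1 : (2 * a + 1 + 3) / 2 = a + 2 := by omega
    have h2 : (2 * a + 1 + 2) / 2 = a + 1 := by omega
    rw [h1, h2]
    simp only [show a + 1 + 1 = a + 2 from rfl]
    omega

lemma c_pow_mul (k a : ℕ) : c (2 ^ k * a) = 2 ^ k * c a := by
  induction k with
  | zero => simp
  | succ k IH =>
    have h : 2 ^ (k + 1) * a = 2 * (2 ^ k * a) := by ring
    rw [h, c_two_mul, IH]; ring

lemma c_claim : ∀ M p Q : ℕ, 1 ≤ p → 2 * Q ≤ 2 ^ M →
    c (2 ^ M * p + 2 ^ M) + c (2 ^ M * p + Q) + (2 ^ M - Q)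
      = c (2 ^ (M + 1) * p + 2 ^ M + Q) := by
  intro M
  induction M with
  | zero =>
    intro p Q hp hQ
    have hQ0 : Q = 0 := by omega
    subst hQ0
    have h1 : 2 ^ 1 * p + 2 ^ 0 + 0 = 2 * p + 1 := by ring
    have h2 : 2 ^ 0 * p + 2 ^ 0 = p + 1 := by ring
    have h3 : 2 ^ 0 * p + 0 = p := by ring
    rw [h1, h2, h3, c_odd p hp]
    omega
  | succ M IH =>
    intro p Q hp hQ
    rcases Nat.even_or_odd Q with ⟨q, hq⟩ | ⟨q, hq⟩
    · -- Q = q + q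
      subst hq
      have h1 : 2 ^ (M + 1) * p + 2 ^ (M + 1) = 2 * (2 ^ M * p + 2 ^ M) := by ring
      have h2 : 2 ^ (M + 1) * p + (q + q) = 2 * (2 ^ M * p + q) := by ring
      have h3 : 2 ^ (M + 1 + 1) * p + 2 ^ (M + 1) + (q + q)
          = 2 * (2 ^ (M + 1) * p + 2 ^ M + q) := by ring
      rw [h1, h2, h3, c_two_mul, c_two_mul, c_two_mul]
      have hIH := IH p q hp (by simp [pow_succ] at hQ ⊢; omega)
      have hpow : (2:ℕ) ^ (M + 1) = 2 * 2 ^ M := by ring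
      omega
    · -- Q = 2 * q + 1
      subst hq
      match M with
      | 0 =>
        have hq0 : q = 0 := by norm_num at hQ; omega
        subst hq0
        have h1 : 2 ^ (0 + 1) * p + 2 ^ (0 + 1) = 2 * (p + 1) := by ring
        have h2 : 2 ^ (0 + 1) * p + (2 * 0 + 1) = 2 * p + 1 := by ring
        have h3 : 2 ^ (0 + 1 + 1) * p + 2 ^ (0 + 1) + (2 * 0 + 1) = 2 * (2 * p + 1) + 1 := by ring
        rw [h1, h2, h3, c_odd (2 * p + 1) (by omega)]
        rw [show 2 * p + 1 + 1 = 2 * (p + 1) from by ring, c_two_mul, c_odd p hp]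
        have : (2:ℕ) ^ (0+1) = 2 := by norm_num
        omega
      | M + 1 =>
        -- here exponent is M+2
        have hpow : (2:ℕ) ^ (M + 1) = 2 * 2 ^ M := by ring
        have hq1 : 2 * q + 2 ≤ 2 ^ (M + 1) := by
          rcases Nat.lt_or_ge (2 * q + 1) (2 ^ (M + 1)) with h | h
          · omega
          · exfalso
            have : 2 * q + 1 = 2 ^ (M + 1) := by
              have : 2 * (2 * q + 1) ≤ 2 ^ (M + 1 + 1) := hQ
              rw [pow_succ] at this; omega
            omega
        have hIH1 := IH p q hp (by omega)
        have hIH2 := IH p (q + 1) hp (by omega)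
        have hposA : 0 < 2 ^ (M + 1) * p := by positivity
        have hposB : 0 < (2:ℕ) ^ (M + 1) := by positivity
        have h1 : 2 ^ (M + 1 + 1) * p + 2 ^ (M + 1 + 1) = 2 * (2 ^ (M+1) * p + 2 ^ (M+1)) := by ring
        have h2 : 2 ^ (M + 1 + 1) * p + (2 * q + 1) = 2 * (2 ^ (M+1) * p + q) + 1 := by ring
        have h3 : 2 ^ (M + 1 + 1 + 1) * p + 2 ^ (M + 1 + 1) + (2 * q + 1)
            = 2 * (2 ^ (M + 1 + 1) * p + 2 ^ (M + 1) + q) + 1 := by ring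
        rw [h1, h2, h3, c_two_mul,
          c_odd (2 ^ (M+1) * p + q) (by omega),
          c_odd (2 ^ (M + 1 + 1) * p + 2 ^ (M + 1) + q) (by omega)]
        have e1 : 2 ^ (M+1) * p + q + 1 = 2 ^ (M+1) * p + (q + 1) := by ring
        have e2 : 2 ^ (M + 1 + 1) * p + 2 ^ (M + 1) + q + 1
            = 2 ^ (M + 1 + 1) * p + 2 ^ (M + 1) + (q + 1) := by ring
        rw [e1, e2]
        have hpow2 : (2:ℕ) ^ (M + 1 + 1) = 2 * 2 ^ (M + 1) := by ring
        omega

lemma sum_pow_lt (m : ℕ → ℕ) : ∀ d a, (∀ i j, a ≤ i → i < j → j ≤ a + d → m j < m i) →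
    (∑ i ∈ Finset.Icc a (a + d), 2 ^ m i) < 2 ^ (m a + 1) := by
  intro d
  induction d with
  | zero =>
    intro a _
    simp only [Nat.add_zero, Finset.Icc_self, Finset.sum_singleton]
    exact Nat.pow_lt_pow_succ (by norm_num)
  | succ d IH =>
    intro a h
    have hset : Finset.Icc a (a + (d + 1)) = insert a (Finset.Icc (a + 1) (a + 1 + d)) := by
      ext y; simp [Finset.mem_Icc, Finset.mem_insert]; omega
    rw [hset, Finset.sum_insert (by simp)]
    have hIH := IH (a + 1) (fun i j hi hij hj => h i j (by omega) hij (by omega))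
    have hma : m (a + 1) < m a := h a (a + 1) le_rfl (by omega) (by omega)
    have h1 : (2:ℕ) ^ (m (a + 1) + 1) ≤ 2 ^ m a := Nat.pow_le_pow_right (by norm_num) (by omega)
    have h2 : (2:ℕ) ^ (m a + 1) = 2 ^ m a + 2 ^ m a := by ring
    omega

/-- Let `n = 2^k * n₀ ≥ 2` with `n₀` odd, and let `n₀ = Σ_{i=1}^ℓ 2^(m i)` with
`m 1 > ⋯ > m (ℓ-1) > m ℓ = 0` and `ℓ > 1`. Then for every `j` with
`2 ≤ j ≤ ℓ - 1` and `m j > m (j+1) + 1`, setting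
`a = 2^k * (Σ_{i=1}^{j-1} 2^(m i - 1) + 2^(m j))`, the pair `(a, n - a)`
belongs to `QB n`. -/
theorem QB_mem_b2 (n k n₀ ℓ : ℕ) (hn : 2 ≤ n) (hn₀ : n = 2 ^ k * n₀)
    (hodd : Odd n₀) (hℓ : 1 < ℓ) (m : ℕ → ℕ)
    (hm : ∀ i j, 1 ≤ i → i < j → j ≤ ℓ → m j < m i) (hml : m ℓ = 0)
    (hexp : n₀ = ∑ i ∈ Finset.Icc 1 ℓ, 2 ^ m i)
    (j : ℕ) (hj2 : 2 ≤ j) (hjl : j ≤ ℓ - 1) (hgap : m (j + 1) + 1 < m j) :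
    (2 ^ k * ((∑ i ∈ Finset.Icc 1 (j - 1), 2 ^ (m i - 1)) + 2 ^ m j),
      n - 2 ^ k * ((∑ i ∈ Finset.Icc 1 (j - 1), 2 ^ (m i - 1)) + 2 ^ m j)) ∈ QB n := by
  have hjℓ : j < ℓ := by omega
  set M := m j with hM
  set S := ∑ i ∈ Finset.Icc 1 (j - 1), 2 ^ (m i - 1) with hS
  set Q := ∑ i ∈ Finset.Icc (j + 1) ℓ, 2 ^ m i with hQ
  -- every m i for i ≤ j-1 is > M
  have hmi : ∀ i, 1 ≤ i → i ≤ j - 1 → M + 1 ≤ m i := fun i h1 h2 => hm i j h1 (by omega) (by omega)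
  -- split the binary expansion
  have hsplit : n₀ = 2 * S + 2 ^ M + Q := by
    have e1 : Finset.Icc 1 ℓ = Finset.Ioc 0 ℓ := by ext y; simp; omega
    have e2 : Finset.Icc 1 (j-1) = Finset.Ioc 0 (j-1) := by ext y; simp; omega
    have e3 : Finset.Icc (j+1) ℓ = Finset.Ioc j ℓ := by ext y; simp
    have e4 : Finset.Ioc (j-1) j = {j} := by ext y; simp; omega
    have h1 := Finset.sum_Ioc_consecutive (fun i => 2 ^ m i)
      (show (0:ℕ) ≤ j - 1 by omega) (show j - 1 ≤ ℓ by omega)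
    have h2 := Finset.sum_Ioc_consecutive (fun i => 2 ^ m i)
      (show j - 1 ≤ j by omega) (show j ≤ ℓ by omega)
    have h3 : (∑ i ∈ Finset.Ioc 0 (j-1), 2 ^ m i) = 2 * S := by
      rw [hS, ← e2, Finset.mul_sum]
      refine Finset.sum_congr rfl (fun i hi => ?_)
      simp only [Finset.mem_Icc] at hi
      have := hmi i hi.1 hi.2
      have h4 : m i - 1 + 1 = m i := by omega
      conv_lhs => rw [← h4]
      rw [pow_succ]; ring
    rw [hexp, e1, ← h1, ← h2, e4, h3, Finset.sum_singleton, hQ, e3]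
    ring
  -- divisibility and positivity of S
  have hdvd : 2 ^ M ∣ S := by
    refine Finset.dvd_sum (fun i hi => ?_)
    simp only [Finset.mem_Icc] at hi
    exact pow_dvd_pow 2 (by have := hmi i hi.1 hi.2; omega)
  obtain ⟨p, hSp⟩ := hdvd
  have hSpos : 0 < S := by
    refine Finset.sum_pos (fun i _ => by positivity) ⟨1, ?_⟩
    simp only [Finset.mem_Icc]; omega
  have hp : 1 ≤ p := by
    rcases Nat.eq_zero_or_pos p with h | h
    · simp [h] at hSp; omega
    · exact h
  -- bound on Q
  have hQlt : Q < 2 ^ (m (j + 1) + 1) := by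
    have := sum_pow_lt m (ℓ - (j + 1)) (j + 1)
      (fun i i' h1 h2 h3 => hm i i' (by omega) h2 (by omega))
    rw [show j + 1 + (ℓ - (j + 1)) = ℓ by omega] at this
    exact this
  have h2Q : 2 * Q ≤ 2 ^ M := by
    have h1 : (2:ℕ) ^ (m (j + 1) + 2) ≤ 2 ^ M := Nat.pow_le_pow_right (by norm_num) (by omega)
    have h2 : (2:ℕ) ^ (m (j + 1) + 2) = 2 * 2 ^ (m (j + 1) + 1) := by ring
    omega
  -- the key identity
  have hkey := c_claim M p Q hp h2Q
  rw [show 2 ^ (M + 1) * p = 2 * (2 ^ M * p) from by ring, ← hSp] at hkey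
  rw [show 2 * S + 2 ^ M + Q = n₀ from by omega] at hkey
  -- hkey : c (S + 2^M) + c (S + Q) + (2^M - Q) = c n₀
  obtain ⟨D, hD⟩ : ∃ D, 2 ^ M = Q + D := ⟨2 ^ M - Q, by omega⟩
  have hkey' : c (S + 2 ^ M) + c (S + Q) + D = c n₀ := by omega
  have hn' : n = 2 ^ k * (S + 2 ^ M) + 2 ^ k * (S + Q) := by
    rw [hn₀, hsplit]; ring
  have hpos : 0 < 2 ^ k * (S + Q) := by positivity
  have hmono : 2 ^ k * (S + Q) ≤ 2 ^ k * (S + 2 ^ M) :=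
    Nat.mul_le_mul_left _ (by omega)
  refine ⟨by simpa using by omega, ?_, ?_, ?_⟩
  · show n - 2 ^ k * (S + 2 ^ M) ≤ 2 ^ k * (S + 2 ^ M)
    omega
  · show 2 ^ k * (S + 2 ^ M) + (n - 2 ^ k * (S + 2 ^ M)) = n
    omega
  · show c (2 ^ k * (S + 2 ^ M)) + c (n - 2 ^ k * (S + 2 ^ M))
      + (2 ^ k * (S + 2 ^ M) - (n - 2 ^ k * (S + 2 ^ M))) = c n
    rw [show n - 2 ^ k * (S + 2 ^ M) = 2 ^ k * (S + Q) from by omega]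
    rw [c_pow_mul, c_pow_mul, hn₀, c_pow_mul, ← hkey']
    have e1 : 2 ^ k * (S + 2 ^ M) = 2 ^ k * (S + Q) + 2 ^ k * D := by rw [hD]; ring
    have e2 : 2 ^ k * (c (S + 2 ^ M) + c (S + Q) + D)
        = 2 ^ k * c (S + 2 ^ M) + 2 ^ k * c (S + Q) + 2 ^ k * D := by ring
    omega
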